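/- arXiv:math/0209050 — 2 statements merged into one kernel-verified Lean document; each statement's English description precedes it below -/
import Mathlib

section
/- Let t > 0, and let μ and ν be finite Borel measures on the interval [0,t]. If ∫_{[0,t]} q_k(s) dμ(s) = ∫_{[0,t]} q_k(s) dν(s) for every integer k ≥ 0, then μ = ν. (Equivalently, the linear span of the functions q_k restricted to [0,t] is dense in C([0,t]).) -/
open MeasureTheory ProbabilityTheory Real

open MeasureTheory ProbabilityTheory Real

/-- Signless Stirling numbers of the first kind: coefficient of `x^j` in `x(x+1)⋯(x+k-1)`. -/
noncomputable def stirling1 (k j : ℕ) : ℝ :=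
  (∏ i ∈ Finset.range k, (Polynomial.X + Polynomial.C (i : ℝ))).coeff j

/-- Stirling numbers of the second kind. -/
def stirling2 : ℕ → ℕ → ℕ
  | 0, 0 => 1
  | 0, _ + 1 => 0
  | _ + 1, 0 => 0
  | n + 1, k + 1 => (k + 1) * stirling2 n (k + 1) + stirling2 n k

/-- `p_j(t) = e^{-t} Σ_{k≥j} (t^k/k!) σ₁(k,j)/k!` (terms with `k<j` vanish). -/
noncomputable def pfn (j : ℕ) (t : ℝ) : ℝ :=
  Real.exp (-t) * ∑' k : ℕ, t ^ k / (Nat.factorial k : ℝ) * (stirling1 k j / (Nat.factorial k : ℝ))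

/-- `q_j(t) = e^{-t} Σ_{k≥0} (t^k/(k+1)!) Σ_{i=0}^k σ₁(i,j)/i!`. -/
noncomputable def qfn (j : ℕ) (t : ℝ) : ℝ :=
  Real.exp (-t) * ∑' k : ℕ, t ^ k / (Nat.factorial (k + 1) : ℝ) *
    ∑ i ∈ Finset.range (k + 1), stirling1 i j / (Nat.factorial i : ℝ)

/-- `I(t,s) = ∫_s^t e^{-ξ}/ξ dξ`. -/
noncomputable def Ifun (t s : ℝ) : ℝ := ∫ ξ in s..t, Real.exp (-ξ) / ξ

/-- `I(s) = ∫_s^∞ e^{-ξ}/ξ dξ`. -/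
noncomputable def Iinf (s : ℝ) : ℝ := ∫ ξ in Set.Ioi s, Real.exp (-ξ) / ξ

/-- `I₂(t,s) = ∫_s^t e^{-ξ}/ξ² dξ`. -/
noncomputable def I2fun (t s : ℝ) : ℝ := ∫ ξ in s..t, Real.exp (-ξ) / ξ ^ 2

/-- `I₂(s) = ∫_s^∞ e^{-ξ}/ξ² dξ`. -/
noncomputable def I2inf (s : ℝ) : ℝ := ∫ ξ in Set.Ioi s, Real.exp (-ξ) / ξ ^ 2

/-- `J(t) = ∫_0^t (e^ξ - 1)/ξ dξ`. -/
noncomputable def Jfun (t : ℝ) : ℝ := ∫ ξ in (0:ℝ)..t, (Real.exp ξ - 1) / ξ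

/-!
Substituting `x = n + 1` into the generating function `∑ⱼ σ₁(i,j) xʲ = x(x+1)⋯(x+i-1)` gives
`(n+1)⁽ⁱ⁾/i! = C(i+n, n)`; the hockey-stick and Vandermonde identities together with the
exponential series then collapse `∑ⱼ (n+1)ʲ q_j(s)` to the polynomial
`∑_{l ≤ n} C(n,l) sˡ/(l+1)!` of degree exactly `n`. All terms are nonnegative on `[0, ∞)`, so
the hypothesis can be summed under the integral by monotone convergence: the integrals of these
polynomials agree, hence, the system being triangular, so do all moments. Weierstrass
approximation finishes, since a finite measure on a compact interval is determined by its moments.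
-/

open Polynomial Finset
open scoped Nat

theorem hasSum_tsum_swap_of_nonneg {β γ : Type*} {f : β → γ → ℝ} {g : β → ℝ} {a : ℝ}
    (hf : ∀ b c, 0 ≤ f b c) (hrow : ∀ b, HasSum (f b) (g b)) (hg : HasSum g a) :
    HasSum (fun c => ∑' b, f b c) a := by
  have hsum : Summable (Function.uncurry f) :=
    (summable_prod_of_nonneg fun p => hf p.1 p.2).2
      ⟨fun b => (hrow b).summable, by simpa only [fun b => (hrow b).tsum_eq] using hg.summable⟩
  have htotal : HasSum (Function.uncurry f) a := by
    simpa only [hg.unique (hsum.hasSum.prod_fiberwise hrow)] using hsum.hasSum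
  exact ((Equiv.prodComm γ β).hasSum_iff.2 htotal).prod_fiberwise
    fun c => (hsum.prod_symm.prod_factor c).hasSum

theorem eq_of_forall_sum_range_mul_eq {R : Type*} [Ring R] [NoZeroDivisors R] {a : ℕ → ℕ → R}
    {x y : ℕ → R} (ha : ∀ n, a n n ≠ 0)
    (h : ∀ n, ∑ l ∈ range (n + 1), a n l * x l = ∑ l ∈ range (n + 1), a n l * y l) : x = y := by
  funext n
  induction n using Nat.strong_induction_on with
  | _ n ih =>
    have hn := h n
    rw [sum_range_succ, sum_range_succ, sum_congr rfl fun l hl => by rw [ih l (mem_range.1 hl)],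
      add_right_inj] at hn
    exact mul_left_cancel₀ (ha n) hn

theorem hasSum_integral_of_nonneg {α ι : Type*} [MeasurableSpace α] [Countable ι] {μ : Measure α}
    {F : ι → α → ℝ} {f : α → ℝ} (hF_meas : ∀ i, AEStronglyMeasurable (F i) μ)
    (hF_nonneg : ∀ i, 0 ≤ᵐ[μ] F i) (hf : Integrable f μ)
    (h_lim : ∀ᵐ x ∂μ, HasSum (fun i => F i x) (f x)) :
    HasSum (fun i => ∫ x, F i x ∂μ) (∫ x, f x ∂μ) :=
  hasSum_integral_of_dominated_convergence F hF_meas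
    (fun i => (hF_nonneg i).mono fun _ hx => (Real.norm_of_nonneg hx).le)
    (h_lim.mono fun _ hx => hx.summable)
    (hf.congr (h_lim.mono fun _ hx => hx.tsum_eq.symm)) h_lim

theorem Continuous.integrable_of_ae_mem {X E : Type*} [TopologicalSpace X] [T2Space X]
    [MeasurableSpace X] [OpensMeasurableSpace X] [NormedAddCommGroup E] {μ : Measure X}
    [IsFiniteMeasureOnCompacts μ] {K : Set X} (hK : IsCompact K) (hμ : ∀ᵐ x ∂μ, x ∈ K)
    {f : X → E} (hf : Continuous f) : Integrable f μ := by
  rw [← Measure.restrict_eq_self_of_ae_mem hμ]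
  exact hf.continuousOn.integrableOn_compact hK

section Moments

variable {a b : ℝ} {μ ν : Measure ℝ} [IsFiniteMeasure μ] [IsFiniteMeasure ν]

theorem integral_eval_eq_of_integral_pow_eq (hμ : ∀ᵐ x ∂μ, x ∈ Set.Icc a b)
    (hν : ∀ᵐ x ∂ν, x ∈ Set.Icc a b) (h : ∀ m : ℕ, ∫ x, x ^ m ∂μ = ∫ x, x ^ m ∂ν)
    (p : ℝ[X]) : ∫ x, p.eval x ∂μ = ∫ x, p.eval x ∂ν := by
  have hint {ρ : Measure ℝ} [IsFiniteMeasure ρ] (hρ : ∀ᵐ x ∂ρ, x ∈ Set.Icc a b) (q : ℝ[X]) :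
      Integrable (fun x => q.eval x) ρ :=
    q.continuous.integrable_of_ae_mem isCompact_Icc hρ
  induction p using Polynomial.induction_on' with
  | add p q hp hq =>
    simp only [eval_add]
    rw [integral_add (hint hμ p) (hint hμ q), integral_add (hint hν p) (hint hν q), hp, hq]
  | monomial m c =>
    simp only [eval_monomial]
    rw [integral_const_mul, integral_const_mul, h]

theorem integral_eq_of_integral_pow_eq (hμ : ∀ᵐ x ∂μ, x ∈ Set.Icc a b)
    (hν : ∀ᵐ x ∂ν, x ∈ Set.Icc a b) (h : ∀ m : ℕ, ∫ x, x ^ m ∂μ = ∫ x, x ^ m ∂ν)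
    {g : ℝ → ℝ} (hg : Continuous g) : ∫ x, g x ∂μ = ∫ x, g x ∂ν := by
  have hdist {ρ : Measure ℝ} [IsFiniteMeasure ρ] (hρ : ∀ᵐ x ∂ρ, x ∈ Set.Icc a b) {ε : ℝ}
      (p : ℝ[X]) (hp : ∀ x ∈ Set.Icc a b, |p.eval x - g x| < ε) :
      dist (∫ x, p.eval x ∂ρ) (∫ x, g x ∂ρ) ≤ ε * ρ.real Set.univ := by
    rw [dist_eq_norm, ← integral_sub (p.continuous.integrable_of_ae_mem isCompact_Icc hρ)
      (hg.integrable_of_ae_mem isCompact_Icc hρ)]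
    exact norm_integral_le_of_norm_le_const (f := fun x => p.eval x - g x)
      (hρ.mono fun x hx => (hp x hx).le)
  refine eq_of_forall_dist_le fun ε hε => ?_
  set C := μ.real Set.univ + ν.real Set.univ + 1
  have hC : 0 < C := by positivity
  obtain ⟨p, hp⟩ := exists_polynomial_near_of_continuousOn a b g hg.continuousOn (ε / C)
    (div_pos hε hC)
  calc dist (∫ x, g x ∂μ) (∫ x, g x ∂ν)
      ≤ dist (∫ x, p.eval x ∂μ) (∫ x, g x ∂μ) + dist (∫ x, p.eval x ∂ν) (∫ x, g x ∂ν) := by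
        rw [← integral_eval_eq_of_integral_pow_eq hμ hν h p, dist_comm (∫ x, p.eval x ∂μ)]
        exact dist_triangle _ _ _
    _ ≤ ε / C * μ.real Set.univ + ε / C * ν.real Set.univ :=
        add_le_add (hdist hμ p hp) (hdist hν p hp)
    _ ≤ ε := by
        rw [← mul_add, div_mul_eq_mul_div, div_le_iff₀ hC]
        nlinarith

theorem MeasureTheory.Measure.ext_of_integral_pow_eq (hμ : ∀ᵐ x ∂μ, x ∈ Set.Icc a b)
    (hν : ∀ᵐ x ∂ν, x ∈ Set.Icc a b) (h : ∀ m : ℕ, ∫ x, x ^ m ∂μ = ∫ x, x ^ m ∂ν) : μ = ν :=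
  ext_of_forall_integral_eq_of_IsFiniteMeasure fun f =>
    integral_eq_of_integral_pow_eq hμ hν h f.continuous

end Moments

theorem prod_range_X_add_C_eq_ascPochhammer (R : Type*) [CommSemiring R] (k : ℕ) :
    ∏ i ∈ range k, (X + C (i : R)) = ascPochhammer R k := by
  induction k with
  | zero => simp
  | succ k ih => rw [prod_range_succ, ih, ascPochhammer_succ_right, map_natCast]

theorem stirling1_eq_coeff_ascPochhammer (k j : ℕ) :
    stirling1 k j = (ascPochhammer ℝ k).coeff j := by
  rw [stirling1, prod_range_X_add_C_eq_ascPochhammer]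

theorem stirling1_eq_cast_coeff_ascPochhammer_nat (k j : ℕ) : stirling1 k j = ((ascPochhammer ℕ k).coeff j : ℝ) := by
  rw [stirling1_eq_coeff_ascPochhammer, ← ascPochhammer_map (Nat.castRingHom ℝ), coeff_map]
  rfl

theorem stirling1_nonneg (k j : ℕ) : 0 ≤ stirling1 k j := by
  rw [stirling1_eq_cast_coeff_ascPochhammer_nat]; positivity

theorem stirling1_eq_zero_of_lt {k j : ℕ} (h : k < j) : stirling1 k j = 0 := by
  rw [stirling1_eq_coeff_ascPochhammer]
  exact coeff_eq_zero_of_natDegree_lt (by simpa using h)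

theorem sum_stirling1_mul_pow {i k : ℕ} (hik : i ≤ k) (x : ℝ) :
    ∑ j ∈ range (k + 1), stirling1 i j * x ^ j = (ascPochhammer ℝ i).eval x := by
  simp only [stirling1_eq_coeff_ascPochhammer]
  exact (eval_eq_sum_range' (by simpa using Nat.lt_succ_of_le hik) x).symm

theorem ascPochhammer_eval_succ_div_factorial (n i : ℕ) :
    (ascPochhammer ℝ i).eval ((n : ℝ) + 1) / (i ! : ℝ) = ((i + n).choose n : ℝ) := by
  have h := factorial_mul_ascPochhammer ℝ n i
  rw [add_comm i n, Nat.cast_add_choose, ← h]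
  field_simp

noncomputable def qcoeff (j k : ℕ) : ℝ :=
  (∑ i ∈ range (k + 1), stirling1 i j / (i ! : ℝ)) / ((k + 1)! : ℝ)

theorem qcoeff_nonneg (j k : ℕ) : 0 ≤ qcoeff j k := by
  unfold qcoeff
  exact div_nonneg (sum_nonneg fun i _ => div_nonneg (stirling1_nonneg i j) (by positivity))
    (by positivity)

theorem qfn_eq_tsum (j : ℕ) (s : ℝ) : qfn j s = exp (-s) * ∑' k, qcoeff j k * s ^ k := by
  rw [qfn]
  congr 1
  exact tsum_congr fun k => by rw [qcoeff]; ring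

theorem hasSum_natCast_add_one_pow_mul_qcoeff (n k : ℕ) :
    HasSum (fun j => ((n : ℝ) + 1) ^ j * qcoeff j k)
      (((k + n + 1).choose (n + 1) : ℝ) / ((k + 1)! : ℝ)) := by
  have hvanish : ∀ j ∉ range (k + 1), ((n : ℝ) + 1) ^ j * qcoeff j k = 0 := by
    intro j hj
    have hkj : k < j := by simpa using hj
    simp only [qcoeff]
    rw [sum_eq_zero fun i hi => by
      rw [stirling1_eq_zero_of_lt (by have := mem_range.mp hi; omega), zero_div]]
    simp
  convert hasSum_sum_of_ne_finset_zero (L := .unconditional ℕ) hvanish using 1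
  calc (((k + n + 1).choose (n + 1) : ℕ) : ℝ) / ((k + 1)! : ℝ)
      = (∑ i ∈ range (k + 1), ((i + n).choose n : ℝ)) / ((k + 1)! : ℝ) := by
        rw [← Nat.sum_range_add_choose]; push_cast; rfl
    _ = (∑ i ∈ range (k + 1), (∑ j ∈ range (k + 1), stirling1 i j * ((n : ℝ) + 1) ^ j) / i !)
          / ((k + 1)! : ℝ) := by
        congr 1
        refine sum_congr rfl fun i hi => ?_
        rw [sum_stirling1_mul_pow (by have := mem_range.mp hi; omega),
          ascPochhammer_eval_succ_div_factorial]
    _ = ∑ j ∈ range (k + 1), ((n : ℝ) + 1) ^ j * qcoeff j k := by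
        simp only [qcoeff, mul_div_assoc', sum_div, mul_sum, div_div]
        rw [sum_comm]
        refine sum_congr rfl fun i _ => sum_congr rfl fun j _ => ?_
        ring

theorem hasSum_choose_div_factorial_mul_pow (l : ℕ) (s : ℝ) :
    HasSum (fun k => ((k + 1).choose (l + 1) : ℝ) / ((k + 1)! : ℝ) * s ^ k)
      (s ^ l / ((l + 1)! : ℝ) * exp s) := by
  refine (hasSum_nat_add_iff' l).1 ?_
  have hhead : ∑ k ∈ range l, ((k + 1).choose (l + 1) : ℝ) / ((k + 1)! : ℝ) * s ^ k = 0 :=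
    sum_eq_zero fun k hk => by
      rw [Nat.choose_eq_zero_of_lt (by have := mem_range.mp hk; omega)]; simp
  rw [hhead, sub_zero]
  have hexp : HasSum (fun m => s ^ m / (m ! : ℝ)) (exp s) := by
    rw [exp_eq_exp_ℝ]; exact NormedSpace.expSeries_div_hasSum_exp s
  refine (hexp.mul_left (s ^ l / ((l + 1)! : ℝ))).congr_fun fun m => ?_
  rw [show m + l + 1 = (l + 1) + m by ring, Nat.cast_add_choose, pow_add]
  field_simp

theorem choose_add_add_one_eq_sum (n k : ℕ) :
    (k + n + 1).choose (n + 1) = ∑ l ∈ range (n + 1), n.choose l * (k + 1).choose (l + 1) := by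
  rw [show k + n + 1 = (k + 1) + n by ring, Nat.add_choose_eq,
    Nat.sum_antidiagonal_eq_sum_range_succ_mk, sum_range_succ']
  simp only [Nat.choose_zero_right, one_mul, Nat.sub_zero, Nat.choose_succ_self, add_zero]
  refine sum_congr rfl fun l hl => ?_
  rw [mul_comm, show n + 1 - (l + 1) = n - l by omega,
    Nat.choose_symm (by have := mem_range.mp hl; omega)]

theorem hasSum_add_choose_div_factorial_mul_pow (n : ℕ) (s : ℝ) :
    HasSum (fun k => ((k + n + 1).choose (n + 1) : ℝ) / ((k + 1)! : ℝ) * s ^ k)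
      (exp s * ∑ l ∈ range (n + 1), (n.choose l : ℝ) / ((l + 1)! : ℝ) * s ^ l) := by
  have hterm := hasSum_sum fun l (_ : l ∈ range (n + 1)) =>
    (hasSum_choose_div_factorial_mul_pow l s).mul_left (n.choose l : ℝ)
  have hvalue : ∑ l ∈ range (n + 1), (n.choose l : ℝ) * (s ^ l / ((l + 1)! : ℝ) * exp s) =
      exp s * ∑ l ∈ range (n + 1), (n.choose l : ℝ) / ((l + 1)! : ℝ) * s ^ l := by
    rw [mul_sum]; exact sum_congr rfl fun l _ => by ring
  rw [← hvalue]
  refine hterm.congr_fun fun k => ?_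
  rw [choose_add_add_one_eq_sum]
  push_cast
  rw [sum_div, sum_mul]
  exact sum_congr rfl fun l _ => by ring

theorem hasSum_natCast_add_one_pow_mul_qfn (n : ℕ) {s : ℝ} (hs : 0 ≤ s) :
    HasSum (fun j => ((n : ℝ) + 1) ^ j * qfn j s)
      (∑ l ∈ range (n + 1), (n.choose l : ℝ) / ((l + 1)! : ℝ) * s ^ l) := by
  have hrow (k : ℕ) : HasSum (fun j => ((n : ℝ) + 1) ^ j * qcoeff j k * s ^ k)
      (((k + n + 1).choose (n + 1) : ℝ) / ((k + 1)! : ℝ) * s ^ k) :=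
    (hasSum_natCast_add_one_pow_mul_qcoeff n k).mul_right _
  have hcol := (hasSum_tsum_swap_of_nonneg (fun k j => by have := qcoeff_nonneg j k; positivity)
    hrow (hasSum_add_choose_div_factorial_mul_pow n s)).mul_left (exp (-s))
  rw [← mul_assoc, ← exp_add, neg_add_cancel, exp_zero, one_mul] at hcol
  refine hcol.congr_fun fun j => ?_
  simp only [qfn_eq_tsum, mul_assoc, tsum_mul_left]
  ring

theorem qfn_measurable (j : ℕ) : Measurable (qfn j) :=
  (measurable_exp.comp measurable_neg).mul (Measurable.tsum fun k => by fun_prop)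

theorem qfn_nonneg (j : ℕ) {s : ℝ} (hs : 0 ≤ s) : 0 ≤ qfn j s := by
  rw [qfn_eq_tsum]
  exact mul_nonneg (exp_pos _).le
    (tsum_nonneg fun k => mul_nonneg (qcoeff_nonneg j k) (pow_nonneg hs k))

theorem hasSum_natCast_add_one_pow_mul_integral_qfn {t : ℝ} {ρ : Measure ℝ} [IsFiniteMeasure ρ]
    (hρ : ∀ᵐ s ∂ρ, s ∈ Set.Icc 0 t) (n : ℕ) :
    HasSum (fun j => ((n : ℝ) + 1) ^ j * ∫ s, qfn j s ∂ρ)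
      (∑ l ∈ range (n + 1), (n.choose l : ℝ) / ((l + 1)! : ℝ) * ∫ s, s ^ l ∂ρ) := by
  have hmct := hasSum_integral_of_nonneg
    (fun j => ((qfn_measurable j).const_mul (((n : ℝ) + 1) ^ j)).aestronglyMeasurable)
    (fun j => hρ.mono fun s hs => by have := qfn_nonneg j hs.1; positivity)
    ((continuous_finsetSum _ fun l _ => by fun_prop).integrable_of_ae_mem isCompact_Icc hρ)
    (hρ.mono fun s hs => hasSum_natCast_add_one_pow_mul_qfn n hs.1)
  simp only [integral_const_mul] at hmct
  rwa [integral_finsetSum _ fun l _ =>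
      ((continuous_pow l).integrable_of_ae_mem isCompact_Icc hρ).const_mul _,
    sum_congr rfl fun l _ => integral_const_mul _ _] at hmct

theorem stmt9_general (t : ℝ) (μ ν : Measure ℝ)
    [IsFiniteMeasure μ] [IsFiniteMeasure ν]
    (hμ : μ (Set.Icc 0 t)ᶜ = 0) (hν : ν (Set.Icc 0 t)ᶜ = 0)
    (h : ∀ k : ℕ, ∫ s in Set.Icc 0 t, qfn k s ∂μ = ∫ s in Set.Icc 0 t, qfn k s ∂ν) :
    μ = ν := by
  rw [← Measure.restrict_eq_self_of_ae_mem (ae_iff.2 hμ),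
    ← Measure.restrict_eq_self_of_ae_mem (ae_iff.2 hν)]
  have hμI : ∀ᵐ s ∂μ.restrict (Set.Icc 0 t), s ∈ Set.Icc 0 t := ae_restrict_mem measurableSet_Icc
  have hνI : ∀ᵐ s ∂ν.restrict (Set.Icc 0 t), s ∈ Set.Icc 0 t := ae_restrict_mem measurableSet_Icc
  refine Measure.ext_of_integral_pow_eq hμI hνI <| congrFun <|
    eq_of_forall_sum_range_mul_eq (a := fun n l => (n.choose l : ℝ) / ((l + 1)! : ℝ))
      (fun n => div_ne_zero (by simp) (by positivity)) fun n => ?_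
  refine (hasSum_natCast_add_one_pow_mul_integral_qfn hμI n).unique ?_
  simpa only [h] using hasSum_natCast_add_one_pow_mul_integral_qfn hνI n

/-- Analytic core of Theorem 3: finite Borel measures on `[0,t]` are determined by their
integrals against the functions `q_k`. -/
theorem stmt9 (t : ℝ) (ht : 0 < t) (μ ν : Measure ℝ)
    [IsFiniteMeasure μ] [IsFiniteMeasure ν]
    (hμ : μ (Set.Icc 0 t)ᶜ = 0) (hν : ν (Set.Icc 0 t)ᶜ = 0)
    (h : ∀ k : ℕ, ∫ s in Set.Icc 0 t, qfn k s ∂μ = ∫ s in Set.Icc 0 t, qfn k s ∂ν) :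
    μ = ν :=
  stmt9_general t μ ν hμ hν h
end

section
/- For every integer j ≥ 1 and every s > 0, p_j'(s) = (e^{−s}/s)·∫_0^s e^{ξ}·(p_{j−1}(ξ) − p_j(ξ)) dξ. -/
open MeasureTheory ProbabilityTheory Real

open MeasureTheory ProbabilityTheory Real

/-! Write `p_j(t) = e^{-t} f_j(t)` with `f_j(t) = ∑ c_j(k) t^k/k!` and `c_j(k) = σ₁(k,j)/k!`.
Then `p_j' = e^{-t} (f_j' - f_j)`, so the claim is `s (f_j'(s) - f_j(s)) = ∫₀ˢ (f_{j-1} - f_j)`.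
Both sides are power series in `s` (differentiate and integrate term by term, the coefficients
being bounded by `σ₁(k,j) ≤ k!`), and the Stirling recurrence `σ₁(k+1,j) = k σ₁(k,j) + σ₁(k,j-1)`
is exactly the coefficient identity `(k+1)(c_j(k+1) - c_j(k)) = c_{j-1}(k) - c_j(k)`. -/

open scoped Nat

noncomputable def egf (a : ℕ → ℝ) (t : ℝ) : ℝ := ∑' k, t ^ k / k ! * a k

section egf

variable {a b : ℕ → ℝ} {A B : ℝ}

lemma norm_pow_div_factorial_mul_le (ha : ∀ k, |a k| ≤ A) {t R : ℝ} (htR : |t| ≤ R) (k : ℕ) :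
    ‖t ^ k / k ! * a k‖ ≤ A * (R ^ k / k !) := by
  rw [Real.norm_eq_abs, abs_mul, abs_div, abs_pow, Nat.abs_cast, mul_comm]
  gcongr
  · exact (abs_nonneg _).trans (ha 0)
  · exact ha k

lemma summable_egf (ha : ∀ k, |a k| ≤ A) (t : ℝ) : Summable fun k => t ^ k / k ! * a k :=
  .of_norm_bounded ((Real.summable_pow_div_factorial |t|).mul_left A)
    (norm_pow_div_factorial_mul_le ha le_rfl)

lemma egf_sub (ha : ∀ k, |a k| ≤ A) (hb : ∀ k, |b k| ≤ B) (t : ℝ) :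
    egf (a - b) t = egf a t - egf b t := by
  rw [egf, egf, egf, ← (summable_egf ha t).tsum_sub (summable_egf hb t)]
  simp only [Pi.sub_apply, mul_sub]

lemma hasDerivAt_tsum_pow_succ_div (ha : ∀ k, |a k| ≤ A) (x : ℝ) :
    HasDerivAt (fun y => ∑' k, y ^ (k + 1) / (k + 1)! * a k) (egf a x) x := by
  set R := |x| + 1
  have hball : ∀ y ∈ Metric.ball (0 : ℝ) R, |y| ≤ R := fun y hy => by
    simpa [Real.dist_eq] using (Metric.mem_ball.mp hy).le
  refine hasDerivAt_tsum_of_isPreconnected ((Real.summable_pow_div_factorial R).mul_left A)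
    Metric.isOpen_ball (convex_ball 0 R).isPreconnected (fun k y _ => ?_)
    (fun k y hy => norm_pow_div_factorial_mul_le ha (hball y hy) k)
    (Metric.mem_ball_self (by positivity)) (by simp) (by simp [R])
  refine (((hasDerivAt_pow (k + 1) y).div_const ((k + 1)! : ℝ)).mul_const (a k)).congr_deriv ?_
  rw [Nat.factorial_succ]
  push_cast
  field_simp

lemma hasDerivAt_egf (ha : ∀ k, |a k| ≤ A) (x : ℝ) :
    HasDerivAt (egf a) (egf (fun k => a (k + 1)) x) x := by
  have h : egf a = fun y => a 0 + ∑' k, y ^ (k + 1) / (k + 1)! * a (k + 1) := by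
    ext y
    rw [egf, (summable_egf ha y).tsum_eq_zero_add]
    simp
  rw [h]
  exact (hasDerivAt_tsum_pow_succ_div (fun k => ha (k + 1)) x).const_add _

lemma continuous_egf (ha : ∀ k, |a k| ≤ A) : Continuous (egf a) :=
  continuous_iff_continuousAt.2 fun x => (hasDerivAt_egf ha x).continuousAt

lemma integral_egf (ha : ∀ k, |a k| ≤ A) (s : ℝ) :
    ∫ x in (0 : ℝ)..s, egf a x = ∑' k, s ^ (k + 1) / (k + 1)! * a k := by
  rw [intervalIntegral.integral_eq_sub_of_hasDerivAt (fun x _ => hasDerivAt_tsum_pow_succ_div ha x)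
    ((continuous_egf ha).intervalIntegrable 0 s)]
  simp

lemma hasDerivAt_exp_neg_mul_egf (ha : ∀ k, |a k| ≤ A) (x : ℝ) :
    HasDerivAt (fun t => Real.exp (-t) * egf a t)
      (Real.exp (-x) * (egf (fun k => a (k + 1)) x - egf a x)) x :=
  ((hasDerivAt_neg x).exp.mul (hasDerivAt_egf ha x)).congr_deriv (by ring)

lemma mul_egf_succ_sub_egf_eq_integral (ha : ∀ k, |a k| ≤ A) (hb : ∀ k, |b k| ≤ B)
    (hab : ∀ k : ℕ, (k + 1) * (b (k + 1) - b k) = a k) (s : ℝ) :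
    s * (egf (fun k => b (k + 1)) s - egf b s) = ∫ x in (0 : ℝ)..s, egf a x := by
  rw [← egf_sub (fun k => hb (k + 1)) hb, egf, ← tsum_mul_left, integral_egf ha]
  refine tsum_congr fun k => ?_
  simp only [← hab, Pi.sub_apply, Nat.factorial_succ]
  push_cast
  field_simp
  ring

end egf

lemma stirling1_succ_succ (k j : ℕ) :
    stirling1 (k + 1) (j + 1) = k * stirling1 k (j + 1) + stirling1 k j := by
  rw [stirling1, Finset.prod_range_succ, mul_add, Polynomial.coeff_add, Polynomial.coeff_mul_X,
    Polynomial.coeff_mul_C, ← stirling1, ← stirling1]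
  ring

lemma stirling1_succ_zero (k : ℕ) : stirling1 (k + 1) 0 = k * stirling1 k 0 := by
  rw [stirling1, Finset.prod_range_succ, mul_add, Polynomial.coeff_add,
    Polynomial.coeff_mul_X_zero, Polynomial.coeff_mul_C, ← stirling1]
  ring

lemma stirling1_eq_stirlingFirst (k j : ℕ) : stirling1 k j = Nat.stirlingFirst k j := by
  induction k generalizing j with
  | zero => cases j <;> simp [stirling1, Polynomial.coeff_one]
  | succ k ih =>
    cases j with
    | zero => cases k <;> simp [stirling1_succ_zero, ih]
    | succ j => simp [stirling1_succ_succ, Nat.stirlingFirst_succ_succ, ih]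

lemma Nat.stirlingFirst_le_factorial (n k : ℕ) : Nat.stirlingFirst n k ≤ n ! := by
  induction n generalizing k with
  | zero => cases k <;> simp
  | succ n ih =>
    cases k with
    | zero => simp
    | succ k =>
      rw [Nat.stirlingFirst_succ_succ, Nat.factorial_succ, add_mul, one_mul]
      exact add_le_add (Nat.mul_le_mul_left n (ih _)) (ih _)

noncomputable def stirlingCoeff (j k : ℕ) : ℝ := stirling1 k j / k !

lemma pfn_eq_exp_neg_mul_egf (j : ℕ) (t : ℝ) :
    pfn j t = Real.exp (-t) * egf (stirlingCoeff j) t := rfl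

lemma abs_stirlingCoeff_le_one (j k : ℕ) : |stirlingCoeff j k| ≤ 1 := by
  rw [stirlingCoeff, stirling1_eq_stirlingFirst, abs_of_nonneg (by positivity),
    div_le_one (by positivity)]
  exact_mod_cast Nat.stirlingFirst_le_factorial k j

lemma succ_mul_stirlingCoeff_succ_sub (j k : ℕ) :
    (k + 1) * (stirlingCoeff (j + 1) (k + 1) - stirlingCoeff (j + 1) k) =
      stirlingCoeff j k - stirlingCoeff (j + 1) k := by
  simp only [stirlingCoeff, stirling1_succ_succ, Nat.factorial_succ]
  push_cast
  field_simp
  ring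

/-- The derivative formula `p_j'(s) = (e^{-s}/s)∫_0^s e^ξ (p_{j-1}(ξ) - p_j(ξ)) dξ`
for `j ≥ 1` and `s > 0`. -/
theorem stmt14 (j : ℕ) (hj : 1 ≤ j) (s : ℝ) (hs : 0 < s) :
    deriv (pfn j) s =
      (Real.exp (-s) / s) * ∫ ξ in (0:ℝ)..s, Real.exp ξ * (pfn (j - 1) ξ - pfn j ξ) := by
  obtain ⟨m, rfl⟩ := Nat.exists_eq_add_of_le' hj
  have hc := abs_stirlingCoeff_le_one
  have hdiff : ∀ k, |(stirlingCoeff m - stirlingCoeff (m + 1)) k| ≤ 2 := fun k =>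
    (abs_sub _ _).trans (by linarith [hc m k, hc (m + 1) k])
  have hintegrand (ξ : ℝ) : Real.exp ξ * (pfn m ξ - pfn (m + 1) ξ) =
      egf (stirlingCoeff m - stirlingCoeff (m + 1)) ξ := by
    rw [egf_sub (hc m) (hc (m + 1)), pfn_eq_exp_neg_mul_egf, pfn_eq_exp_neg_mul_egf, ← mul_sub,
      ← mul_assoc, ← Real.exp_add, add_neg_cancel, Real.exp_zero, one_mul]
  have hp : HasDerivAt (pfn (m + 1)) _ s := hasDerivAt_exp_neg_mul_egf (hc (m + 1)) s
  rw [hp.deriv, Nat.add_sub_cancel, intervalIntegral.integral_congr fun ξ _ => hintegrand ξ,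
    ← mul_egf_succ_sub_egf_eq_integral hdiff (hc (m + 1)) (succ_mul_stirlingCoeff_succ_sub m) s]
  field_simp
end
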